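/- arXiv:2402.06072 — 3 statements merged into one kernel-verified Lean document; each statement's English description precedes it below -/
import Mathlib

section
/- Let ψ : κ → ℂ* be a nontrivial additive character and χ_1,…,χ_n : μ_d → ℂ* multiplicative characters such that none of χ_1,…,χ_n and the product χ_1⋯χ_n is trivial. Then g(ψ,χ_1)·g(ψ,χ_2)⋯g(ψ,χ_n) = g(ψ, χ_1⋯χ_n)·j(χ_1,…,χ_n). -/
open scoped BigOperators

noncomputable section

namespace MotivicGJ

variable {κ : Type} [Field κ] [Fintype κ] [DecidableEq κ]

/-- The map `κˣ → μ_d`, `m ↦ m ^ ((q - 1) / d)`, where `q = |κ|`. -/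
def toMu (d : ℕ) (hd : d ∣ Fintype.card κ - 1) (m : κˣ) : rootsOfUnity d κ :=
  ⟨m ^ ((Fintype.card κ - 1) / d), by
    rw [mem_rootsOfUnity, ← pow_mul, Nat.div_mul_cancel hd, ← Fintype.card_units]
    exact pow_card_eq_one⟩

/-- The Gauss sum `g(ψ, χ) = -∑_{m ∈ κˣ} ψ(m) χ(m^((q-1)/d))`. -/
def gSum (d : ℕ) (hd : d ∣ Fintype.card κ - 1) (ψ : AddChar κ ℂ)
    (χ : rootsOfUnity d κ →* ℂˣ) : ℂ :=
  - ∑ m : κˣ, ψ (m : κ) * (χ (toMu d hd m) : ℂ)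

/-- The Jacobi sum `j(χ₁, …, χₙ)`. -/
def jSum (d : ℕ) (hd : d ∣ Fintype.card κ - 1) {n : ℕ}
    (χ : Fin n → (rootsOfUnity d κ →* ℂˣ)) : ℂ :=
  (-1 : ℂ) ^ (n - 1) *
    ∑ m ∈ Finset.univ.filter (fun m : Fin n → κˣ => (∑ i, (m i : κ)) = 1),
      ∏ i, (χ i (toMu d hd (m i)) : ℂ)

/-- The conjugate (inverse) additive character `ψ̄(a) = ψ(-a)`. -/
def conjAddChar (ψ : AddChar κ ℂ) : AddChar κ ℂ where
  toFun a := ψ (-a)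
  map_zero_eq_one' := by (try simp only []); rw [neg_zero]; exact ψ.map_zero_eq_one
  map_add_eq_mul' a b := by (try simp only []); rw [neg_add]; exact ψ.map_add_eq_mul _ _

/-! Expanding the product of Gauss sums gives `∑ₘ ψ(m₁ + ⋯ + mₙ) ∏ᵢ χᵢ(mᵢ)`, which we sort by
the value `s = m₁ + ⋯ + mₙ`. Rescaling `m ↦ u • m` shows that the fibre sum over `u * s` is
`(∏ᵢ χᵢ)(u)` times the one over `s`. Since `∏ᵢ χᵢ` is nontrivial, the fibre over `0` therefore
vanishes, and the fibre over a unit `s` is `(∏ᵢ χᵢ)(s)` times the fibre over `1`, which is the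
Jacobi sum up to sign. -/

theorem _root_.IsCyclic.range_powMonoidHom_eq_ker {G : Type*} [CommGroup G] [IsCyclic G]
    [Finite G] {k d : ℕ} (hkd : k * d = Nat.card G) :
    (powMonoidHom k : G →* G).range = (powMonoidHom d : G →* G).ker := by
  have hk : 0 < k := Nat.pos_of_mul_pos_right (hkd ▸ Nat.card_pos)
  refine Subgroup.eq_of_le_of_card_ge ?_ ?_
  · rintro _ ⟨y, rfl⟩
    simp [← pow_mul, hkd, pow_card_eq_one']
  · rw [IsCyclic.card_powMonoidHom_ker, IsCyclic.card_powMonoidHom_range, ← hkd,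
      Nat.gcd_mul_left_left, Nat.gcd_mul_right_left, Nat.mul_div_cancel_left _ hk]

def toMuHom (d : ℕ) (hd : d ∣ Fintype.card κ - 1) : κˣ →* rootsOfUnity d κ where
  toFun := toMu d hd
  map_one' := Subtype.ext (one_pow _)
  map_mul' a b := Subtype.ext (mul_pow a b _)

theorem toMuHom_surjective {d : ℕ} (hd : d ∣ Fintype.card κ - 1) :
    Function.Surjective (toMuHom d hd) := by
  intro ζ
  have hcard : (Fintype.card κ - 1) / d * d = Nat.card κˣ := by
    rw [Nat.div_mul_cancel hd, Nat.card_eq_fintype_card, Fintype.card_units]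
  have hζ : (ζ : κˣ) ∈ (powMonoidHom d : κˣ →* κˣ).ker := ζ.2
  obtain ⟨u, hu⟩ := (IsCyclic.range_powMonoidHom_eq_ker hcard).ge hζ
  exact ⟨u, Subtype.ext hu⟩

theorem _root_.AddChar.map_sum_eq_prod {ι A M : Type*} [AddCommMonoid A] [CommMonoid M]
    (ψ : AddChar A M) (s : Finset ι) (f : ι → A) : ψ (∑ i ∈ s, f i) = ∏ i ∈ s, ψ (f i) :=
  map_prod ψ.toMonoidHom (fun i => Multiplicative.ofAdd (f i)) s

theorem _root_.Fintype.sum_eq_add_sum_units {F M : Type*} [GroupWithZero F] [Fintype F]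
    [DecidableEq F] [AddCommMonoid M] (f : F → M) : ∑ x, f x = f 0 + ∑ u : Fˣ, f u := by
  rw [Fintype.sum_eq_add_sum_compl 0, Finset.sum_subtype _ (p := (· ≠ 0)) (by simp) f]
  exact congrArg _ (Fintype.sum_equiv unitsEquivNeZero.symm _ _ fun _ => rfl)

section JacobiSumAt

variable {F : Type*} [Field F] [Fintype F] [DecidableEq F] {R : Type*} [CommRing R]
  {ι : Type*} [Fintype ι] [DecidableEq ι] (η : ι → Fˣ →* Rˣ)

def jacobiSumAt (s : F) : R :=
  ∑ m : ι → Fˣ with ∑ i, (m i : F) = s, ∏ i, (η i (m i) : R)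

theorem jacobiSumAt_units_mul (u : Fˣ) (s : F) :
    jacobiSumAt η (u * s) = ((∏ i, η i) u : R) * jacobiSumAt η s := by
  simp only [jacobiSumAt, Finset.sum_filter, Finset.mul_sum]
  refine (Fintype.sum_equiv (Equiv.mulLeft fun _ => u) _ _ fun m => ?_).symm
  simp [Units.coe_prod, MonoidHom.finsetProd_apply, Finset.prod_mul_distrib, ← Finset.mul_sum]

theorem jacobiSumAt_zero [IsDomain R] (hη : ∏ i, η i ≠ 1) : jacobiSumAt η (0 : F) = 0 := by
  obtain ⟨u, hu⟩ : ∃ u, (∏ i, η i) u ≠ 1 := by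
    by_contra! h
    exact hη (MonoidHom.ext h)
  have hfix := jacobiSumAt_units_mul η u 0
  rw [mul_zero] at hfix
  exact (mul_left_eq_self₀.1 hfix.symm).resolve_left (Units.val_eq_one.not.2 hu)

def gaussSumUnits (ψ : AddChar F R) (χ : Fˣ →* Rˣ) : R :=
  ∑ u : Fˣ, ψ u * (χ u : R)

theorem prod_gaussSumUnits [IsDomain R] (ψ : AddChar F R) (hη : ∏ i, η i ≠ 1) :
    ∏ i, gaussSumUnits ψ (η i) = gaussSumUnits ψ (∏ i, η i) * jacobiSumAt η 1 := by
  calc ∏ i, gaussSumUnits ψ (η i)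
      = ∑ m : ι → Fˣ, ψ (∑ i, (m i : F)) * ∏ i, (η i (m i) : R) := by
        simp only [gaussSumUnits, Fintype.prod_sum, Finset.prod_mul_distrib,
          AddChar.map_sum_eq_prod]
    _ = ∑ s : F, ψ s * jacobiSumAt η s := by
        rw [← Finset.sum_fiberwise Finset.univ fun m : ι → Fˣ => ∑ i, (m i : F)]
        simp only [jacobiSumAt, Finset.mul_sum]
        refine Finset.sum_congr rfl fun s _ => Finset.sum_congr rfl fun m hm => ?_
        rw [(Finset.mem_filter.1 hm).2]
    _ = ∑ u : Fˣ, ψ u * jacobiSumAt η (u : F) := by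
        rw [Fintype.sum_eq_add_sum_units, jacobiSumAt_zero η hη, mul_zero, zero_add]
    _ = gaussSumUnits ψ (∏ i, η i) * jacobiSumAt η 1 := by
        simp only [gaussSumUnits, Finset.sum_mul, mul_assoc, ← jacobiSumAt_units_mul, mul_one]

end JacobiSumAt

theorem prod_gSum_eq_gSum_mul_jSum_general (d : ℕ) (hd : d ∣ Fintype.card κ - 1)
    (ψ : AddChar κ ℂ) {n : ℕ} (χ : Fin n → (rootsOfUnity d κ →* ℂˣ))
    (hprod : (∏ i, χ i) ≠ 1) :
    (∏ i, gSum d hd ψ (χ i)) = gSum d hd ψ (∏ i, χ i) * jSum d hd χ := by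
  have gSum_eq (χ' : rootsOfUnity d κ →* ℂˣ) :
      gSum d hd ψ χ' = -gaussSumUnits ψ (χ'.comp (toMuHom d hd)) := rfl
  have jSum_eq :
      jSum d hd χ = (-1) ^ (n - 1) * jacobiSumAt (fun i => (χ i).comp (toMuHom d hd)) 1 := rfl
  have comp_prod : (∏ i, χ i).comp (toMuHom d hd) = ∏ i, (χ i).comp (toMuHom d hd) :=
    map_prod (MonoidHom.compHom' (toMuHom d hd)) _ _
  have hη : ∏ i, (χ i).comp (toMuHom d hd) ≠ 1 := by
    rwa [← comp_prod, Ne, ← MonoidHom.one_comp (toMuHom d hd),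
      MonoidHom.cancel_right (toMuHom_surjective hd)]
  obtain ⟨k, rfl⟩ : ∃ k, n = k + 1 :=
    Nat.exists_eq_add_one.2 (Nat.pos_of_ne_zero (by rintro rfl; simp at hprod))
  rw [Finset.prod_congr rfl fun i _ => gSum_eq (χ i), gSum_eq, jSum_eq, Finset.prod_neg,
    prod_gaussSumUnits _ ψ hη, comp_prod, Finset.card_univ, Fintype.card_fin,
    Nat.add_sub_cancel, pow_succ]
  ring

/-- If none of `χ₁, …, χₙ` and `χ₁⋯χₙ` is trivial, then
`g(ψ,χ₁)⋯g(ψ,χₙ) = g(ψ, χ₁⋯χₙ) ⬝ j(χ₁,…,χₙ)`. -/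
theorem prod_gSum_eq_gSum_mul_jSum (d : ℕ) (hd0 : 0 < d) (hd : d ∣ Fintype.card κ - 1)
    (ψ : AddChar κ ℂ) (hψ : ψ ≠ 1) {n : ℕ} (χ : Fin n → (rootsOfUnity d κ →* ℂˣ))
    (h1 : ∀ i, χ i ≠ 1) (hprod : (∏ i, χ i) ≠ 1) :
    (∏ i, gSum d hd ψ (χ i)) = gSum d hd ψ (∏ i, χ i) * jSum d hd χ :=
  prod_gSum_eq_gSum_mul_jSum_general d hd ψ χ hprod

end MotivicGJ
end
end

section
/- The map ((m_1,…,m_n),(k,l)) ↦ (m_1,…,m_{n−1}, m_n·k, m_n·l) is a bijection from S_1^{(n)} × S_1^{(2)} onto S_1^{(n+1)} \ (S_1^{(n−1)} × S_0^{(2)}), where S_c^{(n)} = {(m_1,…,m_n) ∈ (κ*)^n : m_1+⋯+m_n = c} and S_1^{(n−1)} × S_0^{(2)} is identified with the subset of S_1^{(n+1)} consisting of tuples whose first n−1 entries sum to 1 and whose last two entries sum to 0. -/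
open scoped BigOperators

namespace MotivicGJ

private lemma aux (κ : Type) [Field κ] (m : ℕ)
    (F : ((Fin (m+2) → κˣ) × (Fin 2 → κˣ)) → (Fin (m+3) → κˣ))
    (hF1 : ∀ p (j : Fin (m+3)) (hj : (j : ℕ) < m + 1), F p j = p.1 ⟨j, by omega⟩)
    (hF2 : ∀ p, F p ⟨m+1, by omega⟩ = p.1 ⟨m+1, by omega⟩ * p.2 0)
    (hF3 : ∀ p, F p ⟨m+2, by omega⟩ = p.1 ⟨m+1, by omega⟩ * p.2 1) :
    Set.BijOn F
      ({a : Fin (m+2) → κˣ | (∑ i, (a i : κ)) = 1} ×ˢ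
        {b : Fin 2 → κˣ | (∑ i, (b i : κ)) = 1})
      ({g : Fin (m+3) → κˣ | (∑ i, (g i : κ)) = 1} \
        {g : Fin (m+3) → κˣ |
          (∑ i : Fin (m+1), (g ⟨i, by omega⟩ : κ)) = 1 ∧
            (g ⟨m+1, by omega⟩ : κ) + (g ⟨m+2, by omega⟩ : κ) = 0}) := by
  classical
  have split3 : ∀ g : Fin (m+3) → κˣ, (∑ i, (g i : κ)) =
      (∑ i : Fin (m+1), (g ⟨i, by omega⟩ : κ)) + g ⟨m+1, by omega⟩ + g ⟨m+2, by omega⟩ := by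
    intro g; rw [Fin.sum_univ_castSucc, Fin.sum_univ_castSucc]; rfl
  have split2 : ∀ a : Fin (m+2) → κˣ, (∑ i, (a i : κ)) =
      (∑ i : Fin (m+1), (a ⟨i, by omega⟩ : κ)) + a ⟨m+1, by omega⟩ := by
    intro a; rw [Fin.sum_univ_castSucc]; rfl
  -- the inverse map
  let G : (Fin (m+3) → κˣ) → ((Fin (m+2) → κˣ) × (Fin 2 → κˣ)) := fun g =>
    if h : ((g ⟨m+1, by omega⟩ : κ) + (g ⟨m+2, by omega⟩ : κ)) = 0 then (1, 1)
    else
      (fun i => if hi : (i : ℕ) < m + 1 then g ⟨i, by omega⟩ else Units.mk0 _ h,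
       fun j => if j = 0 then g ⟨m+1, by omega⟩ * (Units.mk0 _ h)⁻¹
                else g ⟨m+2, by omega⟩ * (Units.mk0 _ h)⁻¹)
  -- key computation for p in the source
  have key : ∀ a : Fin (m+2) → κˣ, ∀ b : Fin 2 → κˣ,
      (∑ i, (b i : κ)) = 1 →
      (F (a, b) ⟨m+1, by omega⟩ : κ) + (F (a, b) ⟨m+2, by omega⟩ : κ) = a ⟨m+1, by omega⟩ := by
    intro a b hb
    rw [Fin.sum_univ_two] at hb
    rw [hF2, hF3, Units.val_mul, Units.val_mul, ← mul_add, hb, mul_one]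
  have mapsto : Set.MapsTo F
      ({a : Fin (m+2) → κˣ | (∑ i, (a i : κ)) = 1} ×ˢ
        {b : Fin 2 → κˣ | (∑ i, (b i : κ)) = 1})
      ({g : Fin (m+3) → κˣ | (∑ i, (g i : κ)) = 1} \
        {g : Fin (m+3) → κˣ |
          (∑ i : Fin (m+1), (g ⟨i, by omega⟩ : κ)) = 1 ∧
            (g ⟨m+1, by omega⟩ : κ) + (g ⟨m+2, by omega⟩ : κ) = 0}) := by
    rintro ⟨a, b⟩ ⟨ha, hb⟩
    simp only [Set.mem_setOf_eq] at ha hb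
    have hsum1 : (∑ i : Fin (m+1), (F (a, b) ⟨i, by omega⟩ : κ)) =
        ∑ i : Fin (m+1), (a ⟨i, by omega⟩ : κ) :=
      Finset.sum_congr rfl fun i _ => by rw [hF1 (a, b) _ (by exact i.isLt)]
    constructor
    · show (∑ i, (F (a, b) i : κ)) = 1
      rw [split3, hsum1, add_assoc, key a b hb, ← split2, ha]
    · intro hcon
      have := hcon.2
      rw [key a b hb] at this
      exact Units.ne_zero _ this
  have hSne : ∀ g : Fin (m+3) → κˣ,
      g ∈ ({g : Fin (m+3) → κˣ | (∑ i, (g i : κ)) = 1} \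
        {g : Fin (m+3) → κˣ |
          (∑ i : Fin (m+1), (g ⟨i, by omega⟩ : κ)) = 1 ∧
            (g ⟨m+1, by omega⟩ : κ) + (g ⟨m+2, by omega⟩ : κ) = 0}) →
      ((g ⟨m+1, by omega⟩ : κ) + (g ⟨m+2, by omega⟩ : κ)) ≠ 0 := by
    rintro g ⟨hg1, hg2⟩ h0
    simp only [Set.mem_setOf_eq] at hg1
    exact hg2 ⟨by linear_combination ((split3 g).symm.trans hg1) - h0, h0⟩
  have hleft : Set.LeftInvOn G F
      ({a : Fin (m+2) → κˣ | (∑ i, (a i : κ)) = 1} ×ˢ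
        {b : Fin 2 → κˣ | (∑ i, (b i : κ)) = 1}) := by
    rintro ⟨a, b⟩ ⟨ha, hb⟩
    simp only [Set.mem_setOf_eq] at ha hb
    have hk := key a b hb
    have hne : (F (a, b) ⟨m+1, by omega⟩ : κ) + (F (a, b) ⟨m+2, by omega⟩ : κ) ≠ 0 := by
      rw [hk]; exact Units.ne_zero _
    show G (F (a, b)) = (a, b)
    have hGd : G (F (a, b)) =
      ((fun i : Fin (m+2) => if hi : (i : ℕ) < m + 1 then F (a, b) ⟨i, by omega⟩ else Units.mk0 _ hne : Fin (m+2) → κˣ),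
       fun j : Fin 2 => if j = 0 then F (a, b) ⟨m+1, by omega⟩ * (Units.mk0 _ hne)⁻¹
                else F (a, b) ⟨m+2, by omega⟩ * (Units.mk0 _ hne)⁻¹) := dif_neg hne
    have hmk : Units.mk0 _ hne = a ⟨m+1, by omega⟩ := Units.ext hk
    have hc1 : ∀ (j : Fin (m+2)) (hj : (j : ℕ) < m + 1),
        (G (F (a, b))).1 j = F (a, b) ⟨j, by omega⟩ := by
      intro j hj; rw [hGd]; exact dif_pos hj
    have hc2 : (G (F (a, b))).1 ⟨m+1, by omega⟩ = Units.mk0 _ hne := by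
      rw [hGd]; exact dif_neg (lt_irrefl (m+1))
    have hc3 : (G (F (a, b))).2 0 = F (a, b) ⟨m+1, by omega⟩ * (Units.mk0 _ hne)⁻¹ := by
      rw [hGd]; rfl
    have hc4 : (G (F (a, b))).2 1 = F (a, b) ⟨m+2, by omega⟩ * (Units.mk0 _ hne)⁻¹ := by
      rw [hGd]; rfl
    refine Prod.ext ?_ ?_
    · funext j
      obtain ⟨jv, hjv⟩ := j
      by_cases hj : jv < m + 1
      · rw [hc1 _ hj, hF1 (a, b) _ hj]
      · have hjv' : jv = m + 1 := by omega
        subst hjv'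
        rw [hc2, hmk]
    · funext j
      have : j = 0 ∨ j = 1 := by omega
      rcases this with rfl | rfl
      · rw [hc3, hmk, hF2]
        exact mul_inv_cancel_comm (a ⟨m+1, by omega⟩) (b 0)
      · rw [hc4, hmk, hF3]
        exact mul_inv_cancel_comm (a ⟨m+1, by omega⟩) (b 1)
  have hright : Set.RightInvOn G F
      ({g : Fin (m+3) → κˣ | (∑ i, (g i : κ)) = 1} \
        {g : Fin (m+3) → κˣ |
          (∑ i : Fin (m+1), (g ⟨i, by omega⟩ : κ)) = 1 ∧
            (g ⟨m+1, by omega⟩ : κ) + (g ⟨m+2, by omega⟩ : κ) = 0}) := by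
    intro g hg
    have hne := hSne g hg
    show F (G g) = g
    have hGd : G g =
      ((fun i : Fin (m+2) => if hi : (i : ℕ) < m + 1 then g ⟨i, by omega⟩ else Units.mk0 _ hne : Fin (m+2) → κˣ),
       fun j : Fin 2 => if j = 0 then g ⟨m+1, by omega⟩ * (Units.mk0 _ hne)⁻¹
                else g ⟨m+2, by omega⟩ * (Units.mk0 _ hne)⁻¹) := dif_neg hne
    have hc1 : ∀ (j : Fin (m+2)) (hj : (j : ℕ) < m + 1),
        (G g).1 j = g ⟨j, by omega⟩ := by
      intro j hj; rw [hGd]; exact dif_pos hj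
    have hc2 : (G g).1 ⟨m+1, by omega⟩ = Units.mk0 _ hne := by
      rw [hGd]; exact dif_neg (lt_irrefl (m+1))
    have hc3 : (G g).2 0 = g ⟨m+1, by omega⟩ * (Units.mk0 _ hne)⁻¹ := by
      rw [hGd]; rfl
    have hc4 : (G g).2 1 = g ⟨m+2, by omega⟩ * (Units.mk0 _ hne)⁻¹ := by
      rw [hGd]; rfl
    funext i
    obtain ⟨iv, hiv⟩ := i
    rcases lt_trichotomy iv (m+1) with hi | hi | hi
    · rw [hF1 (G g) _ hi, hc1 _ hi]
    · subst hi
      rw [hF2, hc2, hc3, mul_comm (g ⟨m+1, by omega⟩), mul_inv_cancel_left]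
    · have hiv' : iv = m + 2 := by omega
      subst hiv'
      rw [hF3, hc2, hc4, mul_comm (g ⟨m+2, by omega⟩), mul_inv_cancel_left]
  have mapsto' : Set.MapsTo G
      ({g : Fin (m+3) → κˣ | (∑ i, (g i : κ)) = 1} \
        {g : Fin (m+3) → κˣ |
          (∑ i : Fin (m+1), (g ⟨i, by omega⟩ : κ)) = 1 ∧
            (g ⟨m+1, by omega⟩ : κ) + (g ⟨m+2, by omega⟩ : κ) = 0})
      ({a : Fin (m+2) → κˣ | (∑ i, (a i : κ)) = 1} ×ˢ
        {b : Fin 2 → κˣ | (∑ i, (b i : κ)) = 1}) := by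
    intro g hg
    have hne := hSne g hg
    obtain ⟨hg1, -⟩ := hg
    simp only [Set.mem_setOf_eq] at hg1
    have hGd : G g =
      ((fun i : Fin (m+2) => if hi : (i : ℕ) < m + 1 then g ⟨i, by omega⟩ else Units.mk0 _ hne : Fin (m+2) → κˣ),
       fun j : Fin 2 => if j = 0 then g ⟨m+1, by omega⟩ * (Units.mk0 _ hne)⁻¹
                else g ⟨m+2, by omega⟩ * (Units.mk0 _ hne)⁻¹) := dif_neg hne
    have h1 : ∀ (j : Fin (m+2)) (hj : (j : ℕ) < m + 1), (G g).1 j = g ⟨j, by omega⟩ := by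
      intro j hj; rw [hGd]; exact dif_pos hj
    have h2 : (G g).1 ⟨m+1, by omega⟩ = Units.mk0 _ hne := by
      rw [hGd]; exact dif_neg (lt_irrefl (m+1))
    have h4 : (G g).2 0 = g ⟨m+1, by omega⟩ * (Units.mk0 _ hne)⁻¹ := by rw [hGd]; rfl
    have h5 : (G g).2 1 = g ⟨m+2, by omega⟩ * (Units.mk0 _ hne)⁻¹ := by rw [hGd]; rfl
    constructor
    · show (∑ i : Fin (m+2), ((G g).1 i : κ)) = 1
      rw [split2]
      have h3 : (∑ i : Fin (m+1), ((G g).1 ⟨i, by omega⟩ : κ)) =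
          ∑ i : Fin (m+1), (g ⟨i, by omega⟩ : κ) :=
        Finset.sum_congr rfl fun i _ => by rw [h1 _ i.isLt]
      rw [h3, h2, Units.val_mk0]
      linear_combination (split3 g).symm.trans hg1
    · show (∑ j : Fin 2, ((G g).2 j : κ)) = 1
      rw [Fin.sum_univ_two, h4, h5, Units.val_mul, Units.val_mul]
      have hiv : (((Units.mk0 _ hne)⁻¹ : κˣ) : κ) =
          ((g ⟨m+1, by omega⟩ : κ) + (g ⟨m+2, by omega⟩ : κ))⁻¹ := by
        rw [Units.val_inv_eq_inv_val, Units.val_mk0]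
      rw [hiv, ← add_mul, mul_inv_cancel₀ hne]
  exact Set.InvOn.bijOn ⟨hleft, hright⟩ mapsto mapsto'

/-- **Statement 16.** For a finite field `κ` and `n ≥ 2`, the map
`((m₁,…,mₙ),(k,l)) ↦ (m₁,…,m_{n-1}, mₙ·k, mₙ·l)` is a bijection from
`S₁^(n) × S₁^(2)` onto `S₁^(n+1) \ (S₁^(n-1) × S₀^(2))`, where
`S_c^(n) = {(m₁,…,mₙ) ∈ (κˣ)^n : m₁+⋯+mₙ = c}` and `S₁^(n-1) × S₀^(2)` is identified
with the set of tuples in `(κˣ)^(n+1)` whose first `n-1` entries sum to `1` and whose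
last two entries sum to `0`. -/
theorem bijOn_nu_S (κ : Type) [Field κ] [Fintype κ] (n : ℕ) (hn : 2 ≤ n) :
    Set.BijOn
      (fun p : (Fin n → κˣ) × (Fin 2 → κˣ) =>
        fun i : Fin (n + 1) =>
          if h : (i : ℕ) < n - 1 then p.1 ⟨i, by omega⟩
          else if (i : ℕ) = n - 1 then p.1 ⟨n - 1, by omega⟩ * p.2 0
          else p.1 ⟨n - 1, by omega⟩ * p.2 1)
      ({m : Fin n → κˣ | (∑ i, (m i : κ)) = 1} ×ˢ
        {m : Fin 2 → κˣ | (∑ i, (m i : κ)) = 1})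
      ({m : Fin (n + 1) → κˣ | (∑ i, (m i : κ)) = 1} \
        {m : Fin (n + 1) → κˣ |
          (∑ i : Fin (n - 1), (m ⟨i, by omega⟩ : κ)) = 1 ∧
            (m ⟨n - 1, by omega⟩ : κ) + (m ⟨n, by omega⟩ : κ) = 0}) := by
  obtain ⟨m, rfl⟩ : ∃ m, n = m + 2 := ⟨n - 2, by omega⟩
  exact aux κ m _
    (fun p j hj => dif_pos hj)
    (fun p => (dif_neg (show ¬ ((m+1 : ℕ) < m + 2 - 1) by omega)).trans
      (if_pos (show (m+1 : ℕ) = m + 2 - 1 by omega)))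
    (fun p => (dif_neg (show ¬ ((m+2 : ℕ) < m + 2 - 1) by omega)).trans
      (if_neg (show ¬ ((m+2 : ℕ) = m + 2 - 1) by omega)))

end MotivicGJ
end

section
/- For every positive divisor n of d and every a ∈ ℤ/dℤ with na ≠ 0, the distribution relation θ̃_d(na) = ∑_{i=0}^{n−1} θ̃_d(a + (d/n)·i) holds in ℚ[G]. -/
open scoped BigOperators

noncomputable section

namespace MotivicGJ

/-- The Stickelberger element `θ_d(a) = ∑_{h ∈ (ℤ/dℤ)ˣ} {-ha/d} σ_h⁻¹ ∈ ℚ[G]`, where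
`G = Gal(ℚ(ζ_d)/ℚ)` is identified with `(ℤ/dℤ)ˣ` and `{x}` is the fractional part
(so `{-ha/d} = val(-ha)/d`). -/
def stick (d : ℕ) [NeZero d] (a : ZMod d) : MonoidAlgebra ℚ (ZMod d)ˣ :=
  ∑ h : (ZMod d)ˣ, MonoidAlgebra.single h⁻¹ ((ZMod.val (-(h : ZMod d) * a) : ℚ) / d)

/-- The trace element `T̃ = ∑_{σ ∈ G} σ ∈ ℚ[G]`. -/
def traceElem (d : ℕ) [NeZero d] : MonoidAlgebra ℚ (ZMod d)ˣ :=
  ∑ σ : (ZMod d)ˣ, MonoidAlgebra.single σ 1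

/-- The normalized Stickelberger element `θ̃_d(a) = θ_d(a) - (1/2)T̃`. -/
def stickNorm (d : ℕ) [NeZero d] (a : ZMod d) : MonoidAlgebra ℚ (ZMod d)ˣ :=
  stick d a - (1 / 2 : ℚ) • traceElem d

/-!
Comparing coefficients at `σ_h⁻¹` reduces the relation to one for `x ↦ {x/d} - 1/2` on
`ℤ/dℤ`. With `d = n m` and `u = -h` a unit, the points `u (a + m i)`, `i < n`, run exactly once
through the fibre `{x | n x = n u a}` of multiplication by `n`. Over any fibre `{x | n x = n b}`
the sum of `{x/d} - 1/2` equals `{n b/d} - 1/2`: computing on the representative `r < m` of the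
fibre, the points are `r + m i < d`, no reduction modulo `d` occurs, and the arithmetic series
`∑ m i / d = (n - 1) / 2` cancels the surplus halves.
-/

def fractSubHalf (d : ℕ) (x : ZMod d) : ℚ := (x.val : ℚ) / d - 1 / 2

section Fiber

variable {n m : ℕ} [NeZero m]

theorem eq_of_natCast_mul_eq_natCast_mul {i j : ℕ} (hi : i < n) (hj : j < n)
    (h : (m : ZMod (n * m)) * i = m * j) : i = j := by
  have hlt : ∀ k < n, m * k < n * m := fun k hk => by
    rw [mul_comm n m]; exact Nat.mul_lt_mul_of_pos_left hk (Nat.pos_of_neZero m)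
  rw [← Nat.cast_mul, ← Nat.cast_mul, ZMod.natCast_eq_natCast_iff', Nat.mod_eq_of_lt (hlt i hi),
    Nat.mod_eq_of_lt (hlt j hj)] at h
  exact Nat.eq_of_mul_eq_mul_left (Nat.pos_of_neZero m) h

variable [NeZero n]

theorem exists_lt_eq_mul_of_natCast_mul_eq_zero {y : ZMod (n * m)}
    (hy : (n : ZMod (n * m)) * y = 0) : ∃ k < n, y = m * k := by
  have hdvd : n * m ∣ n * y.val := by
    rw [← ZMod.natCast_eq_zero_iff, Nat.cast_mul, ZMod.natCast_val, ZMod.cast_id', id, hy]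
  obtain ⟨k, hk⟩ := Nat.dvd_of_mul_dvd_mul_left (Nat.pos_of_neZero n) hdvd
  refine ⟨k, ?_, by rw [← ZMod.natCast_zmod_val y, hk, Nat.cast_mul]⟩
  have := y.val_lt
  rw [hk, mul_comm n m] at this
  exact Nat.lt_of_mul_lt_mul_left this

theorem sum_range_eq_sum_filter_natCast_mul_eq {M : Type*} [AddCommMonoid M]
    (f : ZMod (n * m) → M) (u : (ZMod (n * m))ˣ) (b : ZMod (n * m)) :
    ∑ i ∈ Finset.range n, f (u * (b + m * i)) =
      ∑ x with (n : ZMod (n * m)) * x = n * (u * b), f x := by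
  have hnm : (n : ZMod (n * m)) * m = 0 := by rw [← Nat.cast_mul, ZMod.natCast_self]
  refine Finset.sum_nbij (fun i => u * (b + m * i)) ?_ ?_ ?_ fun _ _ => rfl
  · intro i _
    rw [Finset.mem_filter_univ]
    linear_combination (u * i : ZMod (n * m)) * hnm
  · intro i hi j hj hij
    exact eq_of_natCast_mul_eq_natCast_mul (Finset.mem_range.1 hi) (Finset.mem_range.1 hj)
      (add_left_cancel ((Units.mul_right_inj u).1 hij))
  · intro x hx
    rw [Finset.mem_coe, Finset.mem_filter_univ] at hx
    obtain ⟨k, hk, hxk⟩ := exists_lt_eq_mul_of_natCast_mul_eq_zero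
      (y := ((u⁻¹ : (ZMod (n * m))ˣ) : ZMod (n * m)) * x - b)
      (by linear_combination ((u⁻¹ : (ZMod (n * m))ˣ) : ZMod (n * m)) * hx + n * b * u.inv_mul)
    refine ⟨k, Finset.mem_range.2 hk, ?_⟩
    simp only [← hxk, add_sub_cancel, Units.mul_inv_cancel_left]

theorem natCast_mul_eq_natCast_mul_val_mod (b : ZMod (n * m)) :
    (n : ZMod (n * m)) * b = n * (b.val % m : ℕ) := by
  conv_lhs => rw [← ZMod.natCast_zmod_val b, ← Nat.div_add_mod b.val m]
  rw [Nat.cast_add, mul_add, Nat.cast_mul, ← mul_assoc, ← Nat.cast_mul, ZMod.natCast_self,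
    zero_mul, zero_add]

theorem sum_range_fractSubHalf_add_mul {r : ℕ} (hr : r < m) :
    ∑ i ∈ Finset.range n, fractSubHalf (n * m) (r + m * i) = fractSubHalf (n * m) (n * r) := by
  have hval : ∀ i < n, ((r + m * i : ℕ) : ZMod (n * m)).val = r + m * i := fun i hi =>
    ZMod.val_cast_of_lt (by nlinarith)
  have hnr : ((n : ZMod (n * m)) * r).val = n * r := by
    rw [← Nat.cast_mul]
    exact ZMod.val_cast_of_lt (Nat.mul_lt_mul_of_pos_left hr (Nat.pos_of_neZero n))
  have gauss : (∑ i ∈ Finset.range n, (i : ℚ)) * 2 = n * (n - 1) := by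
    have := Finset.sum_range_id_mul_two n
    rw [← Nat.cast_inj (R := ℚ)] at this
    push_cast [Nat.cast_sub (Nat.one_le_of_lt (Nat.pos_of_neZero n))] at this
    exact this
  calc ∑ i ∈ Finset.range n, fractSubHalf (n * m) (r + m * i)
      = ∑ i ∈ Finset.range n, (((r : ℚ) + m * i) / (n * m) - 1 / 2) := by
        refine Finset.sum_congr rfl fun i hi => ?_
        rw [fractSubHalf, ← Nat.cast_mul, ← Nat.cast_add, hval i (Finset.mem_range.1 hi)]
        push_cast; rfl
    _ = fractSubHalf (n * m) (n * r) := by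
        rw [fractSubHalf, hnr, Finset.sum_sub_distrib, ← Finset.sum_div,
          Finset.sum_add_distrib, ← Finset.mul_sum]
        simp only [Finset.sum_const, Finset.card_range, nsmul_eq_mul]
        have hn : (n : ℚ) ≠ 0 := Nat.cast_ne_zero.2 (NeZero.ne n)
        have hm : (m : ℚ) ≠ 0 := Nat.cast_ne_zero.2 (NeZero.ne m)
        push_cast
        rw [add_div, mul_comm (n : ℚ) m, mul_div_mul_left _ _ hm, mul_comm (m : ℚ) n]
        have hS : (∑ i ∈ Finset.range n, (i : ℚ)) / n = (n - 1) / 2 := by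
          rw [div_eq_iff hn]; linear_combination gauss / 2
        rw [hS]; ring

theorem sum_filter_natCast_mul_eq_fractSubHalf (b : ZMod (n * m)) :
    ∑ x with (n : ZMod (n * m)) * x = n * b, fractSubHalf (n * m) x =
      fractSubHalf (n * m) (n * b) := by
  have h := sum_range_eq_sum_filter_natCast_mul_eq (fractSubHalf (n * m)) 1 (b.val % m : ℕ)
  simp only [Units.val_one, one_mul] at h
  rw [natCast_mul_eq_natCast_mul_val_mod b, ← h]
  exact sum_range_fractSubHalf_add_mul (Nat.mod_lt _ (Nat.pos_of_neZero m))

end Fiber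

theorem stickNorm_eq_sum_single (d : ℕ) [NeZero d] (a : ZMod d) :
    stickNorm d a = ∑ h : (ZMod d)ˣ, MonoidAlgebra.single h⁻¹ (fractSubHalf d (-h * a)) := by
  have htrace : traceElem d = ∑ h : (ZMod d)ˣ, MonoidAlgebra.single h⁻¹ 1 :=
    Fintype.sum_equiv (Equiv.inv _) _ _ fun _ => by rw [Equiv.inv_apply, inv_inv]
  simp only [stickNorm, stick, htrace, Finset.smul_sum, MonoidAlgebra.smul_single', mul_one,
    ← Finset.sum_sub_distrib, ← MonoidAlgebra.single_sub, fractSubHalf]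

theorem stickNorm_distribution_general (d : ℕ) [NeZero d]
    (n : ℕ) (hnd : n ∣ d) (a : ZMod d) :
    stickNorm d ((n : ZMod d) * a) =
      ∑ i ∈ Finset.range n, stickNorm d (a + ((d / n : ℕ) : ZMod d) * (i : ZMod d)) := by
  obtain ⟨m, rfl⟩ := hnd
  have : NeZero n := ⟨left_ne_zero_of_mul (NeZero.ne (n * m))⟩
  have : NeZero m := ⟨right_ne_zero_of_mul (NeZero.ne (n * m))⟩
  rw [Nat.mul_div_cancel_left m (Nat.pos_of_neZero n)]
  simp only [stickNorm_eq_sum_single]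
  rw [Finset.sum_comm]
  refine Finset.sum_congr rfl fun h _ => ?_
  refine (congrArg (MonoidAlgebra.singleAddHom h⁻¹) ?_).trans (map_sum _ _ _)
  calc fractSubHalf (n * m) (-h * (n * a))
      = fractSubHalf (n * m) (n * ((-h : (ZMod (n * m))ˣ) * a)) := by
        rw [Units.val_neg, mul_left_comm]
    _ = ∑ x with (n : ZMod (n * m)) * x = n * ((-h : (ZMod (n * m))ˣ) * a),
          fractSubHalf (n * m) x := (sum_filter_natCast_mul_eq_fractSubHalf _).symm
    _ = ∑ i ∈ Finset.range n, fractSubHalf (n * m) (-h * (a + m * i)) := by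
        rw [← sum_range_eq_sum_filter_natCast_mul_eq, Units.val_neg]

/-- **Statement 18** (distribution relation). For every positive divisor `n` of `d` and
every `a ∈ ℤ/dℤ` with `na ≠ 0`, one has `θ̃_d(na) = ∑_{i=0}^{n-1} θ̃_d(a + (d/n)·i)`. -/
theorem stickNorm_distribution (d : ℕ) [NeZero d] (hd : 3 ≤ d)
    (n : ℕ) (hn : 0 < n) (hnd : n ∣ d) (a : ZMod d) (hna : (n : ZMod d) * a ≠ 0) :
    stickNorm d ((n : ZMod d) * a) =
      ∑ i ∈ Finset.range n, stickNorm d (a + ((d / n : ℕ) : ZMod d) * (i : ZMod d)) :=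
  stickNorm_distribution_general d n hnd a

end MotivicGJ
end
end
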